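/- Assume that Σ_{d≥0} P_{Lw}(d) > 1/2 for every word w over {L,R}, where Lw denotes the word consisting of the letter L followed by w. Then Σ_{d≥0} μ_v(d) > 1/2 for every word v over {L,R}. -/

import Mathlib

/-- The probability mass functions `P t` on ℤ, defined by
`P 1 = δ₀`, `P (2t) = P t`, `P (2t+1) d = ½ P (t+1) (d+1) + ½ P t (d-1)`. -/
noncomputable def P : ℕ → ℤ → ℝ
  | 0, _ => 0
  | 1, d => if d = 0 then 1 else 0
  | (n+2), d =>
      if h : (n + 2) % 2 = 0 then P ((n+2)/2) d
      else (1/2) * P ((n+2)/2 + 1) (d+1) + (1/2) * P ((n+2)/2) (d-1)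
  decreasing_by all_goals omega

/-- Letters of the alphabet. -/
inductive LR | L | R
deriving DecidableEq

/-- One step of the identification of words with odd integers: `L : t ↦ 2t-1`, `R : t ↦ 2t+1`. -/
def LRstep (t : ℕ) : LR → ℕ
  | LR.L => 2 * t - 1
  | LR.R => 2 * t + 1

/-- The odd integer associated to a word over `{L,R}`, starting from 3. -/
def hword (w : List LR) : ℕ := w.foldl LRstep 3

/-- The geometric measure `μ₁`: `μ₁ k = (1/2)^(2-k)` for `k ≤ 1`, and `0` otherwise. -/
noncomputable def mu1 (k : ℤ) : ℝ := if k ≤ 1 then (1/2 : ℝ) ^ (2 - k) else 0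

/-- `μ t = μ₁ * P t`. -/
noncomputable def mu (t : ℕ) (d : ℤ) : ℝ := ∑' k : ℤ, mu1 k * P t (d - k)

/-! Both `P` and `μ = μ₁ * P` satisfy the recursion `f (2n) = f n`,
`f (2n+1) d = ½ f (n+1) (d+1) + ½ f n (d-1)`. Appending a letter maps the triple `(t-1, t, t+1)`
onto a triple built from the values of the old one at `d - 1`, `d`, `d + 1`, so agreement of
`P` and `μ` on two such triples for `d ≥ B` propagates, letter by letter, to `d ≥ B + 1`.
Since `P (2^k + 1)` coincides with `μ₁` for `d ≥ 2 - k`, the triple of `P` around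
`h(Lᵏ R) = 2^(k+2) + 3` agrees with the triple of `μ` around `h(ε) = 3` for `d ≥ 2 - k`. Taking
`k = |v| + 2` gives `P_{Lᵏ R v} = μ_v` on `d ≥ 0`, and `Lᵏ R v` starts with `L`. -/

structure CusickRecursion (f : ℕ → ℤ → ℝ) : Prop where
  even : ∀ n d, f (2 * n) d = f n d
  odd : ∀ n, 1 ≤ n → ∀ d, f (2 * n + 1) d = 1 / 2 * f (n + 1) (d + 1) + 1 / 2 * f n (d - 1)

def TripleAgree (f g : ℕ → ℤ → ℝ) (m s : ℕ) (B : ℤ) : Prop :=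
  ∀ d, B ≤ d → f (m - 1) d = g (s - 1) d ∧ f m d = g s d ∧ f (m + 1) d = g (s + 1) d

namespace CusickRecursion

variable {f g : ℕ → ℤ → ℝ}

lemma apply_two_pow (hf : CusickRecursion f) (k : ℕ) (d : ℤ) : f (2 ^ k) d = f 1 d := by
  induction k with
  | zero => rfl
  | succ k ih => rw [pow_succ', hf.even, ih]

lemma convolution (hf : CusickRecursion f) {C : ℝ} (hC : ∀ t d, |f t d| ≤ C) {c : ℤ → ℝ}
    (hc : Summable c) : CusickRecursion fun t d => ∑' k, c k * f t (d - k) := by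
  have summable (t : ℕ) (d : ℤ) : Summable fun k => c k * f t (d - k) :=
    .of_norm_bounded (hc.abs.mul_right C) fun k => by
      rw [Real.norm_eq_abs, abs_mul]
      exact mul_le_mul_of_nonneg_left (hC t _) (abs_nonneg _)
  refine ⟨fun n d => by simp only [hf.even], fun n hn d => ?_⟩
  have split (k : ℤ) : c k * f (2 * n + 1) (d - k)
      = 1 / 2 * (c k * f (n + 1) (d + 1 - k)) + 1 / 2 * (c k * f n (d - 1 - k)) := by
    rw [hf.odd n hn, sub_add_eq_add_sub, sub_right_comm]
    ring
  simp only [split]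
  rw [((summable _ _).mul_left _).tsum_add ((summable _ _).mul_left _), tsum_mul_left,
    tsum_mul_left]

lemma tripleAgree_LRstep (hf : CusickRecursion f) (hg : CusickRecursion g) {m s : ℕ} {B : ℤ}
    (hm : 2 ≤ m) (hs : 2 ≤ s) (h : TripleAgree f g m s B) (c : LR) :
    TripleAgree f g (LRstep m c) (LRstep s c) (B + 1) := by
  obtain ⟨a, rfl⟩ : ∃ a, m = a + 1 := ⟨m - 1, by omega⟩
  obtain ⟨b, rfl⟩ : ∃ b, s = b + 1 := ⟨s - 1, by omega⟩
  intro d hd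
  obtain ⟨lo, mid, hi⟩ := h d (by omega)
  obtain ⟨-, mid_succ, hi_succ⟩ := h (d + 1) (by omega)
  obtain ⟨lo_pred, mid_pred, -⟩ := h (d - 1) (by omega)
  simp only [Nat.add_sub_cancel] at lo lo_pred
  cases c with
  | L =>
    simp only [LRstep, show 2 * (a + 1) - 1 = 2 * a + 1 by omega,
      show 2 * (b + 1) - 1 = 2 * b + 1 by omega, Nat.add_sub_cancel,
      show 2 * a + 1 + 1 = 2 * (a + 1) by ring, show 2 * b + 1 + 1 = 2 * (b + 1) by ring]
    rw [hf.even, hg.even, hf.even, hg.even, hf.odd a (by omega), hg.odd b (by omega)]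
    exact ⟨lo, by rw [mid_succ, lo_pred], mid⟩
  | R =>
    simp only [LRstep, Nat.add_sub_cancel, show 2 * (a + 1) + 1 + 1 = 2 * (a + 2) by ring,
      show 2 * (b + 1) + 1 + 1 = 2 * (b + 2) by ring]
    rw [hf.even, hg.even, hf.even, hg.even, hf.odd _ (by omega), hg.odd _ (by omega)]
    exact ⟨mid, by rw [hi_succ, mid_pred], hi⟩

lemma two_le_LRstep {m : ℕ} (hm : 2 ≤ m) (c : LR) : 2 ≤ LRstep m c := by
  cases c <;> simp only [LRstep] <;> omega

lemma tripleAgree_foldl (hf : CusickRecursion f) (hg : CusickRecursion g) (v : List LR) :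
    ∀ {m s : ℕ} {B : ℤ}, 2 ≤ m → 2 ≤ s → TripleAgree f g m s B →
      TripleAgree f g (v.foldl LRstep m) (v.foldl LRstep s) (B + v.length) := by
  induction v with
  | nil => intro m s B _ _ h; simpa using h
  | cons c v ih =>
    intro m s B hm hs h
    rw [List.foldl_cons, List.foldl_cons, List.length_cons, Nat.cast_succ, ← add_assoc,
      add_right_comm]
    exact ih (two_le_LRstep hm c) (two_le_LRstep hs c) (tripleAgree_LRstep hf hg hm hs h c)

end CusickRecursion

open CusickRecursion

lemma P_zero (d : ℤ) : P 0 d = 0 := by simp [P]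

lemma P_one (d : ℤ) : P 1 d = if d = 0 then 1 else 0 := by simp [P]

lemma cusickRecursion_P : CusickRecursion P where
  even n d := by
    rcases n with _ | m
    · simp [P_zero]
    · rw [show 2 * (m + 1) = 2 * m + 2 by ring, P, dif_pos (by omega)]
      congr 1
      omega
  odd n hn d := by
    obtain ⟨m, rfl⟩ : ∃ m, n = m + 1 := ⟨n - 1, by omega⟩
    rw [show 2 * (m + 1) + 1 = (2 * m + 1) + 2 by ring, P, dif_neg (by omega),
      show (2 * m + 1 + 2) / 2 = m + 1 by omega]

lemma abs_P_le_one (n : ℕ) (d : ℤ) : |P n d| ≤ 1 := by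
  induction n using Nat.strong_induction_on generalizing d with
  | _ n ih =>
    obtain ⟨k, rfl | rfl⟩ := Nat.even_or_odd' n
    · rcases k.eq_zero_or_pos with rfl | hk
      · simp [P_zero]
      · rw [cusickRecursion_P.even]
        exact ih k (by omega) d
    · rcases k.eq_zero_or_pos with rfl | hk
      · rw [P_one]; split_ifs <;> norm_num
      · rw [cusickRecursion_P.odd k hk]
        have h₁ := abs_le.mp (ih (k + 1) (by omega) (d + 1))
        have h₂ := abs_le.mp (ih k (by omega) (d - 1))
        exact abs_le.mpr ⟨by linarith, by linarith⟩

lemma summable_mu1 : Summable mu1 := by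
  have hinj : Function.Injective fun n : ℕ => 1 - (n : ℤ) := fun a b h => by simpa using h
  refine (hinj.summable_iff fun k hk => ?_).mp ?_
  · have : ¬ k ≤ 1 := fun h => hk ⟨(1 - k).toNat, by simp; omega⟩
    simp [mu1, this]
  · have h (n : ℕ) : mu1 (1 - n) = 1 / 2 * (1 / 2) ^ n := by
      rw [mu1, if_pos (by omega), show (2 : ℤ) - (1 - n) = (n + 1 : ℕ) by push_cast; ring,
        zpow_natCast, pow_succ']
    simpa only [Function.comp_def, h] using summable_geometric_two.mul_left (1 / 2)

lemma cusickRecursion_mu : CusickRecursion mu :=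
  cusickRecursion_P.convolution abs_P_le_one summable_mu1

lemma mu_one (d : ℤ) : mu 1 d = mu1 d := by
  rw [mu, tsum_eq_single d fun k hk => by rw [P_one, if_neg (sub_ne_zero.mpr hk.symm), mul_zero]]
  simp [P_one]

lemma mu1_eq_half_mu1_add_one_add_half_P_one (d : ℤ) :
    mu1 d = 1 / 2 * mu1 (d + 1) + 1 / 2 * P 1 (d - 1) := by
  rw [P_one]
  unfold mu1
  rcases lt_trichotomy d 1 with h | rfl | h
  · rw [if_pos h.le, if_pos (by omega), if_neg (by omega),
      show (2 : ℤ) - d = 2 - (d + 1) + 1 by ring, zpow_add_one₀ (by norm_num)]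
    ring
  · norm_num
  · rw [if_neg (by omega), if_neg (by omega), if_neg (by omega)]
    ring

lemma P_two_pow_add_one (k : ℕ) {d : ℤ} (hd : 2 - k ≤ d) : P (2 ^ k + 1) d = mu1 d := by
  induction k generalizing d with
  | zero =>
    rw [pow_zero, show 1 + 1 = 2 * 1 by rfl, cusickRecursion_P.even, P_one, mu1,
      if_neg (by omega), if_neg (by omega)]
  | succ k ih =>
    rw [pow_succ', cusickRecursion_P.odd _ Nat.one_le_two_pow, ih (by push_cast at hd ⊢; omega),
      cusickRecursion_P.apply_two_pow, ← mu1_eq_half_mu1_add_one_add_half_P_one]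

lemma mu_two (d : ℤ) : mu 2 d = mu1 d := by
  rw [show 2 = 2 * 1 by rfl, cusickRecursion_mu.even, mu_one]

lemma tripleAgree_P_mu (k : ℕ) : TripleAgree P mu (2 ^ (k + 2) + 3) 3 (2 - k) := by
  intro d hd
  have hpow : 2 ^ (k + 2) = 2 * 2 ^ (k + 1) := pow_succ' 2 (k + 1)
  have hP {e : ℤ} (he : 2 - k ≤ e) : P (2 ^ (k + 1) + 2) e = mu1 e := by
    rw [show 2 ^ (k + 1) + 2 = 2 * (2 ^ k + 1) by ring, cusickRecursion_P.even,
      P_two_pow_add_one k he]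
  have hP' {e : ℤ} (he : 1 - k ≤ e) : P (2 ^ (k + 1) + 1) e = mu1 e :=
    P_two_pow_add_one (k + 1) (by push_cast; omega)
  refine ⟨?_, ?_, ?_⟩
  · rw [show 2 ^ (k + 2) + 3 - 1 = 2 * (2 ^ (k + 1) + 1) by omega,
      cusickRecursion_P.even, hP' (by omega), mu_two]
  · rw [show 2 ^ (k + 2) + 3 = 2 * (2 ^ (k + 1) + 1) + 1 by omega,
      cusickRecursion_P.odd _ (by omega), hP (by omega), hP' (by omega),
      show 3 = 2 * 1 + 1 by rfl, cusickRecursion_mu.odd 1 le_rfl, mu_two, mu_one]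
  · rw [show 2 ^ (k + 2) + 3 + 1 = 2 * (2 ^ (k + 1) + 2) by omega,
      cusickRecursion_P.even, hP hd, show 3 + 1 = 2 * 2 by rfl, cusickRecursion_mu.even, mu_two]

lemma hword_replicate_L_append_R (k : ℕ) (v : List LR) :
    hword (List.replicate k LR.L ++ LR.R :: v) = v.foldl LRstep (2 ^ (k + 2) + 3) := by
  have hL : (List.replicate k LR.L).foldl LRstep 3 = 2 ^ (k + 1) + 1 := by
    induction k with
    | zero => rfl
    | succ k ih =>
      rw [List.replicate_succ', List.foldl_append, ih]
      simp only [List.foldl_cons, List.foldl_nil, LRstep]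
      rw [pow_succ _ (k + 1)]
      omega
  rw [hword, List.foldl_append, hL, List.foldl_cons]
  congr 1
  simp only [LRstep]
  ring

lemma P_hword_replicate_L_append_R (k : ℕ) (v : List LR) {d : ℤ} (hd : 2 - k + v.length ≤ d) :
    P (hword (List.replicate k LR.L ++ LR.R :: v)) d = mu (hword v) d := by
  rw [hword_replicate_L_append_R, hword]
  exact (tripleAgree_foldl cusickRecursion_P cusickRecursion_mu v (le_add_left (by norm_num))
    (by norm_num) (tripleAgree_P_mu k) d hd).2.1

/-- If `∑_{d ≥ 0} P_{Lw}(d) > 1/2` for every word `w`, then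
`∑_{d ≥ 0} μ_v(d) > 1/2` for every word `v`. -/
theorem cusick_of_L_words
    (H : ∀ w : List LR, (1 : ℝ) / 2 < ∑' d : ℕ, P (hword (LR.L :: w)) (d : ℤ)) :
    ∀ v : List LR, (1 : ℝ) / 2 < ∑' d : ℕ, mu (hword v) (d : ℤ) := by
  intro v
  calc (1 : ℝ) / 2
      < ∑' d : ℕ, P (hword (List.replicate (v.length + 2) LR.L ++ LR.R :: v)) d :=
        H (List.replicate (v.length + 1) LR.L ++ LR.R :: v)
    _ = ∑' d : ℕ, mu (hword v) d :=
        tsum_congr fun d => P_hword_replicate_L_append_R _ v (by push_cast; omega)
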